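/- (Milne's refinement of Craig interpolation for classical propositional logic.) Classical logic CL enjoys (K, LP)-interpolation: if φ ⊢_CL ψ then there is a formula χ such that every atom occurring in χ occurs in both φ and ψ, φ ⊢_K χ, and χ ⊢_LP ψ. -/

import Mathlib

/-- Propositional formulas: atoms, conjunction, disjunction, De Morgan negation, ⊤, ⊥. -/
inductive Fm : Type where
  | atom : ℕ → Fm
  | conj : Fm → Fm → Fm
  | disj : Fm → Fm → Fm
  | neg  : Fm → Fm
  | top  : Fm
  | bot  : Fm
deriving DecidableEq

/-- The atom `i` occurs in a formula. -/
def occurs (i : ℕ) : Fm → Prop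
  | .atom j => i = j
  | .conj φ ψ => occurs i φ ∨ occurs i ψ
  | .disj φ ψ => occurs i φ ∨ occurs i ψ
  | .neg φ => occurs i φ
  | .top => False
  | .bot => False

/-- The four elements of the De Morgan algebra B4. -/
inductive B4 : Type where
  | f | n | b | t
deriving DecidableEq

/-- Meet in the truth order of B4 (bottom `f`, top `t`, `n` and `b` incomparable). -/
def bmeet : B4 → B4 → B4
  | .f, _ => .f
  | _, .f => .f
  | .t, x => x
  | x, .t => x
  | .n, .n => .n
  | .b, .b => .b
  | .n, .b => .f
  | .b, .n => .f

/-- Join in the truth order of B4. -/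
def bjoin : B4 → B4 → B4
  | .t, _ => .t
  | _, .t => .t
  | .f, x => x
  | x, .f => x
  | .n, .n => .n
  | .b, .b => .b
  | .n, .b => .t
  | .b, .n => .t

/-- De Morgan negation on B4: swaps `f` and `t`, fixes `n` and `b`. -/
def bneg : B4 → B4
  | .f => .t
  | .t => .f
  | .n => .n
  | .b => .b

/-- The information order ⊑ on B4: bottom `n`, top `b`, `f` and `t` incomparable. -/
def infoLe (x y : B4) : Prop := x = y ∨ x = B4.n ∨ y = B4.b

/-- Evaluation of a formula in B4 under an atom assignment (the unique homomorphic
extension of the valuation of atoms). -/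
def evalv (v : ℕ → B4) : Fm → B4
  | .atom j => v j
  | .conj φ ψ => bmeet (evalv v φ) (evalv v ψ)
  | .disj φ ψ => bjoin (evalv v φ) (evalv v ψ)
  | .neg φ => bneg (evalv v φ)
  | .top => .t
  | .bot => .f

/-- Designated values of the matrices B4 and LP3: `t` and `b`. -/
def desB (x : B4) : Prop := x = B4.t ∨ x = B4.b

/-- Consequence over the matrix B4 (designated values {t, b}): the Dunn–Belnap logic B. -/
def Bcon (Γ : Set Fm) (φ : Fm) : Prop :=
  ∀ v : ℕ → B4, (∀ γ ∈ Γ, desB (evalv v γ)) → desB (evalv v φ)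

/-- Consequence over the submatrix LP3 on {f, b, t} (designated {t, b}): the Logic of Paradox. -/
def LPcon (Γ : Set Fm) (φ : Fm) : Prop :=
  ∀ v : ℕ → B4, (∀ j, v j ≠ B4.n) → (∀ γ ∈ Γ, desB (evalv v γ)) → desB (evalv v φ)

/-- Consequence over the submatrix K3 on {f, n, t} (designated {t}): strong Kleene logic. -/
def Kcon (Γ : Set Fm) (φ : Fm) : Prop :=
  ∀ v : ℕ → B4, (∀ j, v j ≠ B4.b) → (∀ γ ∈ Γ, evalv v γ = B4.t) → evalv v φ = B4.t

/-- Consequence over the matrix ETL4 (the algebra B4 with designated set {t}): Exactly True Logic. -/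
def ETLcon (Γ : Set Fm) (φ : Fm) : Prop :=
  ∀ v : ℕ → B4, (∀ γ ∈ Γ, evalv v γ = B4.t) → evalv v φ = B4.t

/-- Consequence over the Boolean submatrix on {f, t} (designated {t}): classical logic CL. -/
def CLcon (Γ : Set Fm) (φ : Fm) : Prop :=
  ∀ v : ℕ → B4, (∀ j, v j = B4.f ∨ v j = B4.t) →
    (∀ γ ∈ Γ, evalv v γ = B4.t) → evalv v φ = B4.t


/-!
The interpolant is the disjunction, over the K3-models `w` of `φ`, of the state description
of `w` on the shared atoms: the conjunction of `p` where `w p = t` and of `−p` where `w p = f`.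
Each K3-model of `φ` makes its own description true, so `φ ⊢_K χ`. Conversely, the designated
set `{t, b}` is a prime filter of B4, so an LP valuation `v` designating `χ` designates one
description, which says that the model `w` lies below `v` in the information order on the
shared atoms. A classical valuation `z` squeezed between `w` (on the atoms of `φ`) and `v`
(on the atoms of `ψ`) then makes `φ` true by monotonicity of evaluation in the information
order, hence `ψ` true, and monotonicity again makes `ψ` designated under `v`.
-/

instance : Fintype B4 :=
  ⟨{B4.f, B4.n, B4.b, B4.t}, fun x => by cases x <;> decide⟩

instance : DecidablePred desB := fun _ => inferInstanceAs (Decidable (_ ∨ _))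

instance (x y : B4) : Decidable (infoLe x y) := inferInstanceAs (Decidable (_ ∨ _))

namespace B4

theorem bmeet_mono : ∀ {x x' y y' : B4}, infoLe x x' → infoLe y y' →
    infoLe (bmeet x y) (bmeet x' y') := by decide

theorem bjoin_mono : ∀ {x x' y y' : B4}, infoLe x x' → infoLe y y' →
    infoLe (bjoin x y) (bjoin x' y') := by decide

theorem bneg_mono : ∀ {x x' : B4}, infoLe x x' → infoLe (bneg x) (bneg x') := by decide

theorem bmeet_ne_b : ∀ {x y : B4}, x ≠ b → y ≠ b → bmeet x y ≠ b := by decide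

theorem bjoin_ne_b : ∀ {x y : B4}, x ≠ b → y ≠ b → bjoin x y ≠ b := by decide

theorem bneg_ne_b : ∀ {x : B4}, x ≠ b → bneg x ≠ b := by decide

theorem desB_bmeet : ∀ x y : B4, desB (bmeet x y) ↔ desB x ∧ desB y := by decide

theorem desB_bjoin : ∀ x y : B4, desB (bjoin x y) ↔ desB x ∨ desB y := by decide

theorem bjoin_t_left : ∀ x : B4, bjoin t x = t := by decide

theorem bjoin_t_right : ∀ x : B4, bjoin x t = t := by decide

theorem infoLe_t_iff : ∀ x : B4, infoLe t x ↔ desB x := by decide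

end B4

open B4

theorem infoLe_evalv {v w : ℕ → B4} {θ : Fm} (h : ∀ j, occurs j θ → infoLe (v j) (w j)) :
    infoLe (evalv v θ) (evalv w θ) := by
  induction θ with
  | atom j => exact h j rfl
  | conj a c iha ihc =>
    exact bmeet_mono (iha fun j hj => h j (.inl hj)) (ihc fun j hj => h j (.inr hj))
  | disj a c iha ihc =>
    exact bjoin_mono (iha fun j hj => h j (.inl hj)) (ihc fun j hj => h j (.inr hj))
  | neg a iha => exact bneg_mono (iha h)
  | top | bot => exact .inl rfl

theorem evalv_ne_b {v : ℕ → B4} (hv : ∀ j, v j ≠ b) (θ : Fm) : evalv v θ ≠ b := by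
  induction θ with
  | atom j => exact hv j
  | conj _ _ iha ihc => exact bmeet_ne_b iha ihc
  | disj _ _ iha ihc => exact bjoin_ne_b iha ihc
  | neg _ iha => exact bneg_ne_b iha
  | top | bot => simp [evalv]

theorem exists_bool_between {w v : ℕ → B4} {A B : Set ℕ} (hw : ∀ j, w j ≠ b)
    (hv : ∀ j, v j ≠ n) (hwv : ∀ j ∈ A, j ∈ B → infoLe (w j) (v j)) :
    ∃ z : ℕ → B4, (∀ j, z j = f ∨ z j = t) ∧ (∀ j ∈ A, infoLe (w j) (z j)) ∧
      ∀ j ∈ B, infoLe (z j) (v j) := by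
  classical
  refine ⟨fun j => if j ∈ A ∧ w j ≠ n then w j else if v j = f then f else t, ?_, ?_, ?_⟩
  · intro j
    have := hw j
    dsimp only
    split_ifs with h h'
    · cases hwj : w j <;> simp_all
    · exact .inl rfl
    · exact .inr rfl
  · intro j hj
    by_cases hn : w j = n
    · exact .inr (.inl hn)
    · simp only [hj, ne_eq, hn, not_false_eq_true, and_self, ↓reduceIte]
      exact .inl rfl
  · intro j hj
    have := hv j
    dsimp only
    split_ifs with h h'
    · exact hwv j h.1 hj
    · exact .inl h'.symm
    · cases hvj : v j <;> simp_all [infoLe]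

def atoms : Fm → Finset ℕ
  | .atom j => {j}
  | .conj φ ψ | .disj φ ψ => atoms φ ∪ atoms ψ
  | .neg φ => atoms φ
  | .top | .bot => ∅

theorem mem_atoms {i : ℕ} {θ : Fm} : i ∈ atoms θ ↔ occurs i θ := by
  induction θ <;> simp [atoms, occurs, *]

def bigDisj : List Fm → Fm
  | [] => .bot
  | θ :: l => .disj θ (bigDisj l)

theorem occurs_bigDisj {i : ℕ} {l : List Fm} (h : occurs i (bigDisj l)) :
    ∃ θ ∈ l, occurs i θ := by
  induction l with
  | nil => exact h.elim
  | cons θ l ih =>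
    rcases h with h | h
    · exact ⟨θ, List.mem_cons_self, h⟩
    · obtain ⟨θ', hθ', h'⟩ := ih h
      exact ⟨θ', List.mem_cons_of_mem θ hθ', h'⟩

theorem evalv_bigDisj_eq_t {v : ℕ → B4} {l : List Fm} {θ : Fm} (hθ : θ ∈ l)
    (h : evalv v θ = t) : evalv v (bigDisj l) = t := by
  induction l with
  | nil => cases hθ
  | cons θ' l ih =>
    rcases List.mem_cons.1 hθ with rfl | hθ
    · simp only [bigDisj, evalv, h, bjoin_t_left]
    · simp only [bigDisj, evalv, ih hθ, bjoin_t_right]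

theorem desB_evalv_bigDisj {v : ℕ → B4} {l : List Fm} :
    desB (evalv v (bigDisj l)) ↔ ∃ θ ∈ l, desB (evalv v θ) := by
  induction l with
  | nil => simp [bigDisj, evalv, desB]
  | cons θ l ih => simp [bigDisj, evalv, desB_bjoin, ih]

/-- The clause for `b` makes `desB_evalv_lit` hold on all of B4. -/
def lit : B4 → ℕ → Fm
  | .t, p => .atom p
  | .f, p => .neg (.atom p)
  | .n, _ => .top
  | .b, p => .conj (.atom p) (.neg (.atom p))

theorem desB_evalv_lit (v : ℕ → B4) (x : B4) (p : ℕ) :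
    desB (evalv v (lit x p)) ↔ infoLe x (v p) := by
  cases x <;> simp only [lit, evalv] <;> generalize v p = y <;> revert y <;> decide

theorem evalv_lit_self {v : ℕ → B4} {p : ℕ} (hp : v p ≠ b) : evalv v (lit (v p) p) = t := by
  cases h : v p <;> simp_all [lit, evalv, bneg]

theorem occurs_lit {i p : ℕ} {x : B4} (h : occurs i (lit x p)) : i = p := by
  cases x <;> simp_all [lit, occurs]

def stateDesc (w : ℕ → B4) : List ℕ → Fm
  | [] => .top
  | p :: L => .conj (lit (w p) p) (stateDesc w L)

def stateDescs : List ℕ → List Fm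
  | [] => [.top]
  | p :: L => (stateDescs L).flatMap fun θ => [f, n, b, t].map fun x => .conj (lit x p) θ

theorem stateDesc_mem_stateDescs (w : ℕ → B4) (L : List ℕ) :
    stateDesc w L ∈ stateDescs L := by
  induction L with
  | nil => exact List.mem_singleton_self _
  | cons p L ih =>
    refine List.mem_flatMap.2 ⟨_, ih, List.mem_map.2 ⟨w p, ?_, rfl⟩⟩
    cases w p <;> decide

theorem occurs_stateDesc {i : ℕ} {w : ℕ → B4} {L : List ℕ} (h : occurs i (stateDesc w L)) :
    i ∈ L := by
  induction L with
  | nil => exact h.elim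
  | cons p L ih =>
    rcases h with h | h
    · exact List.mem_cons.2 (.inl (occurs_lit h))
    · exact List.mem_cons_of_mem p (ih h)

theorem desB_evalv_stateDesc {v w : ℕ → B4} {L : List ℕ} :
    desB (evalv v (stateDesc w L)) ↔ ∀ p ∈ L, infoLe (w p) (v p) := by
  induction L with
  | nil => simp [stateDesc, evalv, desB]
  | cons p L ih => simp [stateDesc, evalv, desB_bmeet, desB_evalv_lit, ih]

theorem evalv_stateDesc_self {w : ℕ → B4} {L : List ℕ} (hw : ∀ p ∈ L, w p ≠ b) :
    evalv w (stateDesc w L) = t := by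
  induction L with
  | nil => rfl
  | cons p L ih =>
    simp only [stateDesc, evalv, evalv_lit_self (hw p List.mem_cons_self),
      ih fun q hq => hw q (List.mem_cons_of_mem p hq)]
    rfl

open Classical in
noncomputable def interpolant (φ : Fm) (L : List ℕ) : Fm :=
  bigDisj ((stateDescs L).filter fun θ =>
    ∃ w : ℕ → B4, (∀ j, w j ≠ b) ∧ evalv w φ = t ∧ stateDesc w L = θ)

theorem occurs_interpolant {i : ℕ} {φ : Fm} {L : List ℕ} (h : occurs i (interpolant φ L)) :
    i ∈ L := by
  obtain ⟨θ, hθ, hi⟩ := occurs_bigDisj h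
  obtain ⟨-, w, -, -, rfl⟩ := by simpa only [List.mem_filter, decide_eq_true_eq] using hθ
  exact occurs_stateDesc hi

theorem kcon_interpolant (φ : Fm) (L : List ℕ) : Kcon {φ} (interpolant φ L) := by
  intro v hv hφ
  refine evalv_bigDisj_eq_t (θ := stateDesc v L) ?_ (evalv_stateDesc_self fun p _ => hv p)
  simp only [List.mem_filter, decide_eq_true_eq]
  exact ⟨stateDesc_mem_stateDescs v L, v, hv, hφ φ rfl, rfl⟩

theorem exists_model_infoLe_of_desB_interpolant {φ : Fm} {L : List ℕ} {v : ℕ → B4}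
    (h : desB (evalv v (interpolant φ L))) :
    ∃ w : ℕ → B4, (∀ j, w j ≠ b) ∧ evalv w φ = t ∧
      ∀ p ∈ L, infoLe (w p) (v p) := by
  obtain ⟨θ, hθ, hθv⟩ := desB_evalv_bigDisj.1 h
  obtain ⟨-, w, hw, hwφ, rfl⟩ := by simpa only [List.mem_filter, decide_eq_true_eq] using hθ
  exact ⟨w, hw, hwφ, desB_evalv_stateDesc.1 hθv⟩

theorem lpcon_interpolant {φ ψ : Fm} (h : CLcon {φ} ψ) :
    LPcon {interpolant φ (atoms φ ∩ atoms ψ).toList} ψ := by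
  intro v hv hχ
  obtain ⟨w, hw, hwφ, hwv⟩ := exists_model_infoLe_of_desB_interpolant (hχ _ rfl)
  obtain ⟨z, hz, hwz, hzv⟩ := exists_bool_between (A := {j | occurs j φ})
    (B := {j | occurs j ψ}) hw hv fun j hjφ hjψ =>
      hwv j (by simpa [mem_atoms] using And.intro hjφ hjψ)
  have hzφ : evalv z φ = t := by
    have hφ := infoLe_evalv (θ := φ) hwz
    rw [hwφ, infoLe_t_iff] at hφ
    exact hφ.resolve_right (evalv_ne_b (fun j => by rcases hz j with h | h <;> simp [h]) φ)
  rw [← infoLe_t_iff, ← h z hz (by simpa using hzφ)]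
  exact infoLe_evalv hzv

/-- Milne's refinement of the Craig interpolation theorem: classical logic CL enjoys
(K, LP)-interpolation. -/
theorem stmt18 (φ ψ : Fm) (h : CLcon {φ} ψ) :
    ∃ χ : Fm, (∀ i, occurs i χ → occurs i φ ∧ occurs i ψ) ∧
      Kcon {φ} χ ∧ LPcon {χ} ψ :=
  ⟨interpolant φ (atoms φ ∩ atoms ψ).toList,
    fun i hi => by simpa [mem_atoms] using occurs_interpolant hi,
    kcon_interpolant φ _, lpcon_interpolant h⟩
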